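/- arXiv:2503.01602 — 2 statements merged into one kernel-verified Lean document; each statement's English description precedes it below -/
import Mathlib

section
/- Pointwise identity for the rescaled gradient: let n ≥ 3, ε > 0, and u : Ω → ℂ^N be C¹ on an open Ω ⊆ ℝ^d. Then at each point, |∇(u/|u|_ε^{n/(n-1)})|²·|u|_ε² = |∇u|²/|u|_ε^{2/(n-1)} + |∇(|u|_ε^{(n-2)/(n-1)})|²·[ (n/(n-2))²·|u|²/|u|_ε² − 2n(n-1)/(n-2)² ]. -/
/-!
Write `r = |u|_ε` (`regNorm ε u` below), `α = -n/(n-1)` and `β = α + 2 = (n-2)/(n-1)`.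
By the chain rule `∂(r^α u) = r^α ∂u + α r^(α-2) ⟨u, ∂u⟩ u` and `∂(r^β) = β r^α ⟨u, ∂u⟩`.
Expanding `‖∂(r^α u)‖²`, both the cross term and the radial term are multiples of `(∂ r^β)²`,
so the identity holds direction by direction (for any `α ≠ -2`), and summing over the
coordinate directions gives the claim.
-/

open scoped RealInnerProductSpace

noncomputable def regNorm {F : Type*} [NormedAddCommGroup F] (ε : ℝ) (z : F) : ℝ :=
  √(‖z‖ ^ 2 + ε ^ 2)

lemma regNorm_pos {F : Type*} [NormedAddCommGroup F] {ε : ℝ} (hε : ε ≠ 0) (z : F) :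
    0 < regNorm ε z :=
  Real.sqrt_pos.2 (by positivity)

section

variable {E F : Type*} [NormedAddCommGroup E] [NormedSpace ℝ E]
  [NormedAddCommGroup F] [InnerProductSpace ℝ F]

lemma norm_smul_add_smul_sq (a b : ℝ) (w z : F) :
    ‖a • w + b • z‖ ^ 2 = a ^ 2 * ‖w‖ ^ 2 + 2 * a * b * ⟪z, w⟫ + b ^ 2 * ‖z‖ ^ 2 := by
  rw [norm_add_sq_real, real_inner_smul_left, real_inner_smul_right, norm_smul, norm_smul,
    mul_pow, mul_pow, real_inner_comm, Real.norm_eq_abs, Real.norm_eq_abs, sq_abs, sq_abs]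
  ring

theorem HasFDerivAt.regNorm_rpow {u : E → F} {D : E →L[ℝ] F} {x : E} (hu : HasFDerivAt u D x)
    {ε : ℝ} (hε : ε ≠ 0) (a : ℝ) :
    HasFDerivAt (fun y => regNorm ε (u y) ^ a)
      ((a * regNorm ε (u x) ^ (a - 2)) • (innerSL ℝ (u x)).comp D) x := by
  have hs : 0 < ‖u x‖ ^ 2 + ε ^ 2 := by positivity
  have h := (hu.norm_sq.add_const (ε ^ 2)).rpow_const (p := a / 2) (Or.inl hs.ne')
  convert h using 1
  · funext y
    rw [regNorm, Real.rpow_div_two_eq_sqrt _ (by positivity)]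
  · rw [← Nat.cast_smul_eq_nsmul ℝ, smul_smul, regNorm, ← Real.rpow_div_two_eq_sqrt _ hs.le,
      sub_div]
    congr 1
    push_cast
    ring_nf

lemma rpow_rescale_identity {r : ℝ} (hr : 0 < r) {α β : ℝ} (hβ : β = α + 2) (hβ0 : β ≠ 0)
    (t V W : ℝ) :
    ((r ^ α) ^ 2 * V + 2 * r ^ α * (α * r ^ (α - 2) * t) * t
        + (α * r ^ (α - 2) * t) ^ 2 * W) * r ^ 2
      = V / r ^ (-2 * α - 2)
        + (β * r ^ (β - 2) * t) ^ 2 * ((α / β) ^ 2 * W / r ^ 2 + 2 * α / β ^ 2) := by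
  have hα2 : r ^ (α - 2) = r ^ α / r ^ 2 := by
    rw [Real.rpow_sub hr, Real.rpow_two]
  have hβ2 : r ^ (β - 2) = r ^ α := by rw [hβ, add_sub_cancel_right]
  have hneg : r ^ (-2 * α - 2) = 1 / ((r ^ α) ^ 2 * r ^ 2) := by
    rw [show -2 * α - 2 = -(α * 2 + 2) by ring, Real.rpow_neg hr.le, Real.rpow_add hr,
      Real.rpow_mul hr.le, Real.rpow_two, Real.rpow_two, one_div]
  have hrα : 0 < r ^ α := Real.rpow_pos_of_pos hr α
  rw [hα2, hβ2, hneg]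
  field_simp
  ring

theorem norm_sq_fderiv_regNorm_rpow_smul_apply {u : E → F} {x : E} (hu : DifferentiableAt ℝ u x)
    {ε : ℝ} (hε : ε ≠ 0) {α β : ℝ} (hβ : β = α + 2) (hβ0 : β ≠ 0) (v : E) :
    ‖fderiv ℝ (fun y => regNorm ε (u y) ^ α • u y) x v‖ ^ 2 * regNorm ε (u x) ^ 2
      = ‖fderiv ℝ u x v‖ ^ 2 / regNorm ε (u x) ^ (-2 * α - 2)
        + (fderiv ℝ (fun y => regNorm ε (u y) ^ β) x v) ^ 2
          * ((α / β) ^ 2 * ‖u x‖ ^ 2 / regNorm ε (u x) ^ 2 + 2 * α / β ^ 2) := by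
  have hD := hu.hasFDerivAt
  have hF : HasFDerivAt (fun y => regNorm ε (u y) ^ α • u y) _ x :=
    (hD.regNorm_rpow hε α).smul hD
  rw [hF.fderiv, (hD.regNorm_rpow hε β).fderiv]
  simp only [add_apply, smul_apply, ContinuousLinearMap.smulRight_apply,
    ContinuousLinearMap.comp_apply, innerSL_apply_apply, smul_eq_mul]
  rw [norm_smul_add_smul_sq, ← rpow_rescale_identity (regNorm_pos hε (u x)) hβ hβ0]

end

/-- Pointwise identity for the rescaled gradient (step (1) of the Frank–Loss integral
identity): for `u : Ω → ℂ^N` of class `C¹` on an open `Ω ⊆ ℝ^d`, `ε > 0`, `n ≥ 3`,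
with `|u|_ε = √(|u|²+ε²)` and `|∇v|² = Σ_j |∂_j v|²`, at every point of `Ω`:
`|∇(u/|u|_ε^{n/(n-1)})|²·|u|_ε² = |∇u|²/|u|_ε^{2/(n-1)}
  + |∇(|u|_ε^{(n-2)/(n-1)})|²·[(n/(n-2))²·|u|²/|u|_ε² − 2n(n-1)/(n-2)²]`. -/
theorem stmt8 {d N : ℕ} (n : ℕ) (hn : 3 ≤ n) (ε : ℝ) (hε : 0 < ε)
    (Ω : Set (EuclideanSpace ℝ (Fin d))) (hΩ : IsOpen Ω)
    (u : EuclideanSpace ℝ (Fin d) → EuclideanSpace ℂ (Fin N))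
    (hu : ContDiffOn ℝ 1 u Ω) :
    ∀ x ∈ Ω,
      (∑ j : Fin d,
          ‖fderiv ℝ (fun y =>
              ((Real.sqrt (‖u y‖ ^ 2 + ε ^ 2)) ^ (-(n : ℝ) / ((n : ℝ) - 1))) • u y) x
            (EuclideanSpace.single j (1:ℝ))‖ ^ 2) *
          (Real.sqrt (‖u x‖ ^ 2 + ε ^ 2)) ^ 2 =
        (∑ j : Fin d, ‖fderiv ℝ u x (EuclideanSpace.single j (1:ℝ))‖ ^ 2) /
            (Real.sqrt (‖u x‖ ^ 2 + ε ^ 2)) ^ ((2 : ℝ) / ((n : ℝ) - 1)) +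
          (∑ j : Fin d,
              (fderiv ℝ (fun y =>
                  (Real.sqrt (‖u y‖ ^ 2 + ε ^ 2)) ^ (((n : ℝ) - 2) / ((n : ℝ) - 1))) x
                (EuclideanSpace.single j (1:ℝ))) ^ 2) *
            (((n : ℝ) / ((n : ℝ) - 2)) ^ 2 * ‖u x‖ ^ 2 /
                (Real.sqrt (‖u x‖ ^ 2 + ε ^ 2)) ^ 2 -
              2 * (n : ℝ) * ((n : ℝ) - 1) / ((n : ℝ) - 2) ^ 2) := by
  intro x hx
  have h3 : (3 : ℝ) ≤ n := by exact_mod_cast hn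
  have hn1 : (n : ℝ) - 1 ≠ 0 := by linarith
  have hn2 : (n : ℝ) - 2 ≠ 0 := by linarith
  have hux : DifferentiableAt ℝ u x :=
    (hu.contDiffAt (hΩ.mem_nhds hx)).differentiableAt one_ne_zero
  have hβ : ((n : ℝ) - 2) / ((n : ℝ) - 1) = -(n : ℝ) / ((n : ℝ) - 1) + 2 := by
    field_simp; ring
  have hβ0 : ((n : ℝ) - 2) / ((n : ℝ) - 1) ≠ 0 := div_ne_zero hn2 hn1
  have key j := norm_sq_fderiv_regNorm_rpow_smul_apply hux hε.ne' hβ hβ0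
    (EuclideanSpace.single j (1 : ℝ))
  have he : -2 * (-(n : ℝ) / ((n : ℝ) - 1)) - 2 = 2 / ((n : ℝ) - 1) := by field_simp; ring
  have hc1 : (-(n : ℝ) / ((n : ℝ) - 1) / (((n : ℝ) - 2) / ((n : ℝ) - 1))) ^ 2
      = ((n : ℝ) / ((n : ℝ) - 2)) ^ 2 := by field_simp
  have hc2 : 2 * (-(n : ℝ) / ((n : ℝ) - 1)) / (((n : ℝ) - 2) / ((n : ℝ) - 1)) ^ 2
      = -(2 * (n : ℝ) * ((n : ℝ) - 1) / ((n : ℝ) - 2) ^ 2) := by field_simp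
  simp only [regNorm, he, hc1, hc2, ← sub_eq_add_neg] at key
  rw [Finset.sum_mul, Finset.sum_div, Finset.sum_mul, ← Finset.sum_add_distrib]
  exact Finset.sum_congr rfl fun j _ => key j
end

section
/- On ℝ^n with n odd, the vector field A(x) = n·(1+|x|²)^{-2}·((1−|x|²)e₁ + 2⟨x,e₁⟩x + 2L_S x) satisfies |A(x)| = n/(1+|x|²) for every x ∈ ℝ^n, and consequently ∫_{ℝ^n} |A|^n dx = n^n ∫_{ℝ^n} (1+|x|²)^{-n} dx. -/
open MeasureTheory
open scoped RealInnerProductSpace Matrix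

/-!
Write `A(x) = n (1+|x|²)⁻² v` with `v = (1-|x|²)e₁ + 2⟨x,e₁⟩x + 2 L_S x`. Skew-symmetry of `L_S`
gives `⟨x, L_S x⟩ = 0` and its zero first row gives `⟨e₁, L_S x⟩ = 0`. For odd `n` each row of `L_S`
but the first is `±` a standard basis covector, each one except `e₁` occurring exactly once, so
`|L_S x|² = |x|² - x₁²`. Expanding `|v|²` with these three facts gives `(1+|x|²)²`, hence
`|A(x)| = n/(1+|x|²)`, and the integral identity follows by pulling out `nⁿ`.
-/

/-- The skew-symmetric matrix `L_S`: zero in the first row and column, with 2×2 blocks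
`[[0,-1],[1,0]]` along the diagonal in the remaining coordinates. -/
def LS (n : ℕ) : Matrix (Fin n) (Fin n) ℝ := fun i j =>
  if i.val = j.val + 1 ∧ j.val % 2 = 1 then 1
  else if j.val = i.val + 1 ∧ i.val % 2 = 1 then -1 else 0

/-- The magnetic potential `A(x) = n·(1+|x|²)⁻²·((1-|x|²)e₁ + 2⟨x,e₁⟩x + 2L_S x)`. -/
noncomputable def Avec (n : ℕ) (hn : 0 < n) (x : EuclideanSpace ℝ (Fin n)) :
    EuclideanSpace ℝ (Fin n) :=
  ((n : ℝ) * ((1 + ‖x‖ ^ 2)⁻¹) ^ 2) •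
    ((1 - ‖x‖ ^ 2) • (EuclideanSpace.single (⟨0, hn⟩ : Fin n) (1 : ℝ)) +
      (2 * x ⟨0, hn⟩) • x +
      (2 : ℝ) • (show EuclideanSpace ℝ (Fin n) from WithLp.toLp 2 (fun i => ∑ j, LS n i j * x j)))

theorem Matrix.dotProduct_mulVec_self_eq_zero_of_transpose_eq_neg {ι R : Type*} [Fintype ι]
    [CommRing R] [IsAddTorsionFree R] {A : Matrix ι ι R} (hA : Aᵀ = -A) (x : ι → R) :
    x ⬝ᵥ (A *ᵥ x) = 0 := by
  refine self_eq_neg.mp ?_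
  calc x ⬝ᵥ (A *ᵥ x) = (Aᵀ *ᵥ x) ⬝ᵥ x := by rw [Matrix.mulVec_transpose, Matrix.dotProduct_mulVec]
    _ = -(x ⬝ᵥ (A *ᵥ x)) := by rw [hA, Matrix.neg_mulVec, neg_dotProduct, dotProduct_comm]

theorem norm_one_sub_sq_smul_add_eq_one_add_sq {E : Type*} [NormedAddCommGroup E]
    [InnerProductSpace ℝ E] {e x y : E} (he : ‖e‖ = 1) (hey : ⟪e, y⟫ = 0) (hxy : ⟪x, y⟫ = 0)
    (hy : ‖y‖ ^ 2 = ‖x‖ ^ 2 - ⟪e, x⟫ ^ 2) :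
    ‖(1 - ‖x‖ ^ 2) • e + (2 * ⟪e, x⟫) • x + (2 : ℝ) • y‖ = 1 + ‖x‖ ^ 2 := by
  have hee : ⟪e, e⟫ = 1 := by rw [real_inner_self_eq_norm_sq, he, one_pow]
  rw [← real_inner_self_eq_norm_sq, ← real_inner_self_eq_norm_sq] at hy
  rw [← sq_eq_sq₀ (norm_nonneg _) (by positivity), ← real_inner_self_eq_norm_sq,
    ← real_inner_self_eq_norm_sq]
  simp only [inner_add_left, inner_add_right, real_inner_smul_left, real_inner_smul_right,
    real_inner_comm e y, real_inner_comm x y, real_inner_comm x e, hee, hey, hxy, hy]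
  ring

namespace LS

theorem transpose_eq_neg (n : ℕ) : (LS n)ᵀ = -LS n := by
  ext i j
  simp only [Matrix.transpose_apply, Matrix.neg_apply, LS]
  split_ifs <;> first | omega | norm_num

theorem apply_eq_zero_of_val_eq_zero {n : ℕ} {i : Fin n} (hi : i.val = 0) (j : Fin n) :
    LS n i j = 0 := by
  simp only [LS]
  split_ifs <;> first | rfl | omega

-- The index paired with `i` by the 2×2 blocks of `LS` (0-indexed: `2k-1 ↔ 2k`); truncated
-- subtraction makes `0` a fixed point.
def partner {n : ℕ} (hn : Odd n) (i : Fin n) : Fin n :=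
  if h : i.val % 2 = 1 then ⟨i.val + 1, by obtain ⟨k, rfl⟩ := hn; omega⟩
  else ⟨i.val - 1, by omega⟩

variable {n : ℕ} (hn : Odd n)

theorem partner_val (i : Fin n) :
    (partner hn i).val = if i.val % 2 = 1 then i.val + 1 else i.val - 1 := by
  unfold partner
  split_ifs <;> rfl

theorem partner_involutive : Function.Involutive (partner hn) := by
  intro i
  ext
  simp only [partner_val]
  split_ifs <;> omega

theorem partner_val_eq_zero_iff (i : Fin n) : (partner hn i).val = 0 ↔ i.val = 0 := by
  rw [partner_val]
  split_ifs
  · exact iff_of_false not_false (by omega)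
  · omega

theorem apply_eq_zero_of_ne_partner {i j : Fin n} (hj : j ≠ partner hn i) : LS n i j = 0 := by
  rw [ne_eq, Fin.ext_iff, partner_val] at hj
  simp only [LS]
  split_ifs at hj ⊢ <;> first | rfl | omega

theorem apply_partner_sq (i : Fin n) : LS n i (partner hn i) ^ 2 = if i.val = 0 then 0 else 1 := by
  simp only [LS, partner_val]
  split_ifs <;> first | omega | norm_num

theorem mulVec_apply (x : Fin n → ℝ) (i : Fin n) :
    (LS n *ᵥ x) i = LS n i (partner hn i) * x (partner hn i) :=
  Fintype.sum_eq_single (partner hn i) fun _ hj =>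
    mul_eq_zero_of_left (apply_eq_zero_of_ne_partner hn hj) _

theorem mulVec_apply_zero (x : Fin n → ℝ) (h0 : 0 < n) : (LS n *ᵥ x) ⟨0, h0⟩ = 0 :=
  Fintype.sum_eq_zero _ fun j => mul_eq_zero_of_left (apply_eq_zero_of_val_eq_zero rfl j) _

theorem sum_mulVec_sq (x : Fin n → ℝ) :
    ∑ i, (LS n *ᵥ x) i ^ 2 = ∑ i, x i ^ 2 - x ⟨0, hn.pos⟩ ^ 2 := by
  let g : Fin n → ℝ := fun k => if k = ⟨0, hn.pos⟩ then 0 else x k ^ 2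
  calc ∑ i, (LS n *ᵥ x) i ^ 2 = ∑ i, g (partner hn i) := by
        refine Finset.sum_congr rfl fun i _ => ?_
        simp only [g, mulVec_apply hn, mul_pow, apply_partner_sq, Fin.ext_iff,
          partner_val_eq_zero_iff]
        split_ifs <;> ring
    _ = ∑ k, g k := Equiv.sum_comp (partner_involutive hn).toPerm g
    _ = ∑ i, x i ^ 2 - x ⟨0, hn.pos⟩ ^ 2 := by
        simp only [g, Finset.sum_ite, Finset.sum_const_zero, Finset.filter_ne', Finset.mem_univ,
          Finset.sum_erase_eq_sub, zero_add]

end LS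

theorem norm_Avec {n : ℕ} (hodd : Odd n) (hn : 0 < n) (x : EuclideanSpace ℝ (Fin n)) :
    ‖Avec n hn x‖ = n / (1 + ‖x‖ ^ 2) := by
  set e := EuclideanSpace.single (⟨0, hn⟩ : Fin n) (1 : ℝ)
  set y : EuclideanSpace ℝ (Fin n) := WithLp.toLp 2 (LS n *ᵥ x.ofLp)
  have hex : ⟪e, x⟫ = x ⟨0, hn⟩ := by simp [e, EuclideanSpace.inner_single_left]
  have hey : ⟪e, y⟫ = 0 := by
    simp [e, EuclideanSpace.inner_single_left, y, LS.mulVec_apply_zero]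
  have hxy : ⟪x, y⟫ = 0 := by
    rw [EuclideanSpace.inner_eq_star_dotProduct, star_trivial, dotProduct_comm]
    exact Matrix.dotProduct_mulVec_self_eq_zero_of_transpose_eq_neg (LS.transpose_eq_neg n) _
  have hy : ‖y‖ ^ 2 = ‖x‖ ^ 2 - ⟪e, x⟫ ^ 2 := by
    rw [EuclideanSpace.real_norm_sq_eq, EuclideanSpace.real_norm_sq_eq, hex]
    exact LS.sum_mulVec_sq hodd _
  have hv := norm_one_sub_sq_smul_add_eq_one_add_sq (by simp [e]) hey hxy hy
  rw [hex] at hv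
  change ‖((n : ℝ) * ((1 + ‖x‖ ^ 2)⁻¹) ^ 2) •
    ((1 - ‖x‖ ^ 2) • e + (2 * x ⟨0, hn⟩) • x + (2 : ℝ) • y)‖ = _
  rw [norm_smul, hv, Real.norm_of_nonneg (by positivity)]
  field_simp

theorem stmt11_general (n : ℕ) (hodd : Odd n) (hn0 : 0 < n) :
    (∀ x : EuclideanSpace ℝ (Fin n), ‖Avec n hn0 x‖ = (n : ℝ) / (1 + ‖x‖ ^ 2)) ∧
    ∫ x : EuclideanSpace ℝ (Fin n), ‖Avec n hn0 x‖ ^ n =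
      (n : ℝ) ^ n * ∫ x : EuclideanSpace ℝ (Fin n), ((1 + ‖x‖ ^ 2) ^ n)⁻¹ := by
  refine ⟨norm_Avec hodd hn0, ?_⟩
  simp_rw [norm_Avec hodd hn0, div_pow, div_eq_mul_inv]
  exact integral_const_mul _ _

/-- On `ℝⁿ` with `n` odd, the Frank–Loss field `A` satisfies `|A(x)| = n/(1+|x|²)`
for every `x`, and consequently `∫ |A|ⁿ dx = nⁿ·∫ (1+|x|²)⁻ⁿ dx`. -/
theorem stmt11 (n : ℕ) (hn : 3 ≤ n) (hodd : Odd n) (hn0 : 0 < n) :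
    (∀ x : EuclideanSpace ℝ (Fin n), ‖Avec n hn0 x‖ = (n : ℝ) / (1 + ‖x‖ ^ 2)) ∧
    ∫ x : EuclideanSpace ℝ (Fin n), ‖Avec n hn0 x‖ ^ n =
      (n : ℝ) ^ n * ∫ x : EuclideanSpace ℝ (Fin n), ((1 + ‖x‖ ^ 2) ^ n)⁻¹ :=
  stmt11_general n hodd hn0
end
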